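/- arXiv:2404.00410 — 2 statements merged into one kernel-verified Lean document; each statement's English description precedes it below -/
import Mathlib

section
/- For every integer n ≥ 20 and every integer m with (n+7)/2 ≤ m ≤ n−7 if n is odd, respectively (n+4)/2 ≤ m ≤ n−6 if n is even, there exists a partition p of n such that λ(p) = m, the largest part of p is at most (n + 2)/2, and the number of parts of p is at most (n + 2)/2. -/
/-- `λ(p) = (1/2)·Σ_{j=1}^k n_j·(n_j − 2j + 1)` for a finite sequence of naturals. -/
def transLam (L : List ℕ) : ℚ :=
  (∑ j ∈ Finset.range L.length,
    (L.getD j 0 : ℚ) * ((L.getD j 0 : ℚ) - 2 * ((j : ℚ) + 1) + 1)) / 2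

/-- A partition of `n`: a nonincreasing list of positive integers summing to `n`. -/
def IsPartitionOf (n : ℕ) (L : List ℕ) : Prop :=
  L.Pairwise (· ≥ ·) ∧ (∀ x ∈ L, 0 < x) ∧ L.sum = n

/-!
`λ(p)` is the sum of the contents (column − row) of the cells of `p`. In the shape
`(x + u + w, y + u, C, 2^u, 1^w)`, increasing `w` adds one cell to the first row and one to the
first column, whose contents sum to `x − |C| − 2` whatever `u` and `w` are; increasing `u` adds
such a pair to each of the first two hooks, with constant total `x + y − 2|C| − 4`. So `n` and `λ`
are affine in `(u, w)`. With `D = n − m` and `E = 2m − n`, the seeds `(3, 4)` and `(4, 5, 3)` cover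
`E ≤ 2D − 3` for odd `n` and `E ≤ 2D − 6` for even `n`, the seeds `(6, 5, 5, 3)` and `(6, 5, 5, 4)`
the rest of the range, and the first part and the number of parts stay within `(n + 2)/2`.
-/

theorem sum_range_getD_eq_sum (L : List ℕ) :
    ∑ j ∈ Finset.range L.length, (L.getD j 0 : ℚ) = L.sum := by
  induction L with
  | nil => simp
  | cons a L ih =>
    rw [List.length_cons, Finset.sum_range_succ']
    simp only [List.getD_cons_succ, List.getD_cons_zero, ih, List.sum_cons]
    push_cast
    ring

theorem transLam_nil : transLam [] = 0 := by
  simp [transLam]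

theorem transLam_cons (a : ℕ) (L : List ℕ) :
    transLam (a :: L) = (a : ℚ) * (a - 1) / 2 + transLam L - L.sum := by
  have shift : ∀ j ∈ Finset.range L.length,
      ((a :: L).getD (j + 1) 0 : ℚ) * ((a :: L).getD (j + 1) 0 - 2 * (((j + 1 : ℕ) : ℚ) + 1) + 1)
        = (L.getD j 0 : ℚ) * (L.getD j 0 - 2 * ((j : ℚ) + 1) + 1) - 2 * L.getD j 0 := by
    intro j _
    rw [List.getD_cons_succ]
    push_cast
    ring
  unfold transLam
  rw [List.length_cons, Finset.sum_range_succ', Finset.sum_congr rfl shift,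
    Finset.sum_sub_distrib, ← Finset.mul_sum, sum_range_getD_eq_sum, List.getD_cons_zero]
  push_cast
  ring

theorem transLam_append (L₁ L₂ : List ℕ) :
    transLam (L₁ ++ L₂) = transLam L₁ + transLam L₂ - L₁.length * L₂.sum := by
  induction L₁ with
  | nil => simp [transLam_nil]
  | cons a L ih =>
    rw [List.cons_append, transLam_cons, transLam_cons, ih, List.sum_append, List.length_cons]
    push_cast
    ring

theorem transLam_replicate (k v : ℕ) :
    transLam (List.replicate k v) = (k : ℚ) * v * (v - k) / 2 := by
  induction k with
  | zero => simp [transLam_nil]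
  | succ k ih =>
    rw [List.replicate_succ, transLam_cons, ih, List.sum_replicate, smul_eq_mul]
    push_cast
    ring

def hookShape (x y : ℕ) (C : List ℕ) (u w : ℕ) : List ℕ :=
  (x + u + w) :: (y + u) :: (C ++ List.replicate u 2 ++ List.replicate w 1)

section hookShape

variable (x y : ℕ) (C : List ℕ) (u w : ℕ)

theorem transLam_hookShape :
    transLam (hookShape x y C u w) = transLam (x :: y :: C)
      + u * ((x + y : ℚ) - 2 * C.length - 4) + w * ((x : ℚ) - C.length - 2) := by
  simp only [hookShape, transLam_cons, transLam_append, transLam_replicate, List.sum_append,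
    List.sum_cons, List.sum_replicate, List.length_append, List.length_replicate, smul_eq_mul]
  push_cast
  ring

theorem sum_hookShape : (hookShape x y C u w).sum = x + y + C.sum + 4 * u + 2 * w := by
  simp only [hookShape, List.sum_cons, List.sum_append, List.sum_replicate, smul_eq_mul]
  ring

theorem length_hookShape : (hookShape x y C u w).length = C.length + u + w + 2 := by
  simp only [hookShape, List.length_cons, List.length_append, List.length_replicate]

variable {x y C u w}

theorem mem_hookShape_bounds (hC : ∀ c ∈ C, 2 ≤ c ∧ c ≤ y) (hy : 0 < y) (hyx : y ≤ x + w)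
    {z : ℕ} (hz : z ∈ hookShape x y C u w) : 0 < z ∧ z ≤ x + u + w := by
  simp only [hookShape, List.mem_cons, List.mem_append, List.mem_replicate] at hz
  grind

theorem pairwise_hookShape (hC : C.Pairwise (· ≥ ·)) (hCy : ∀ c ∈ C, 2 ≤ c ∧ c ≤ y)
    (hy : 0 < y) (hyx : y ≤ x + w) : (hookShape x y C u w).Pairwise (· ≥ ·) := by
  simp only [hookShape, List.pairwise_cons, List.pairwise_append, List.pairwise_replicate,
    List.mem_cons, List.mem_append, List.mem_replicate]
  refine ⟨?_, ?_, ⟨⟨hC, Or.inr le_rfl, ?_⟩, Or.inr le_rfl, ?_⟩⟩ <;> grind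

end hookShape

def HasBoundedPartition (n m : ℕ) : Prop :=
  ∃ L : List ℕ, IsPartitionOf n L ∧ transLam L = (m : ℚ) ∧
    (∀ x ∈ L, 2 * x ≤ n + 2) ∧ 2 * L.length ≤ n + 2

theorem hasBoundedPartition_hookShape {n m x y u w : ℕ} {C : List ℕ}
    (hC : C.Pairwise (· ≥ ·)) (hCy : ∀ c ∈ C, 2 ≤ c ∧ c ≤ y) (hy : 0 < y) (hyx : y ≤ x + w)
    (hx : x ≤ y + C.sum + 2) (hlen : 2 * C.length + 2 ≤ x + y + C.sum)
    (hn : n = x + y + C.sum + 4 * u + 2 * w)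
    (hm : (m : ℚ) = transLam (x :: y :: C)
      + u * ((x + y : ℚ) - 2 * C.length - 4) + w * ((x : ℚ) - C.length - 2)) :
    HasBoundedPartition n m := by
  subst hn
  refine ⟨hookShape x y C u w, ⟨pairwise_hookShape hC hCy hy hyx,
    fun z hz => (mem_hookShape_bounds hCy hy hyx hz).1, sum_hookShape ..⟩,
    (transLam_hookShape ..).trans hm.symm, fun z hz => ?_, ?_⟩
  · have := (mem_hookShape_bounds hCy hy hyx hz).2
    omega
  · rw [length_hookShape]
    omega

theorem hasBoundedPartition_odd_low (u w : ℕ) (hw : 1 ≤ w) :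
    HasBoundedPartition (4 * u + 2 * w + 7) (3 * u + w + 5) := by
  refine hasBoundedPartition_hookShape (x := 3) (y := 4) (C := []) (u := u) (w := w)
    (by decide) (by decide) (by norm_num) (by omega) (by decide) (by decide) ?_ ?_
  · simp only [List.sum_nil]
    ring
  · simp only [transLam_cons, transLam_nil, List.sum_cons, List.sum_nil, List.length_nil]
    push_cast
    ring

theorem hasBoundedPartition_even_low (u w : ℕ) (hw : 1 ≤ w) :
    HasBoundedPartition (4 * u + 2 * w + 12) (3 * u + w + 8) := by
  refine hasBoundedPartition_hookShape (x := 4) (y := 5) (C := [3]) (u := u) (w := w)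
    (by decide) (by decide) (by norm_num) (by omega) (by decide) (by decide) ?_ ?_
  · simp only [List.sum_cons, List.sum_nil]
    ring
  · simp only [transLam_cons, transLam_nil, List.sum_cons, List.sum_nil, List.length_cons,
      List.length_nil]
    push_cast
    ring

theorem hasBoundedPartition_odd_high (u w : ℕ) :
    HasBoundedPartition (4 * u + 2 * w + 19) (3 * u + 2 * w + 14) := by
  refine hasBoundedPartition_hookShape (x := 6) (y := 5) (C := [5, 3]) (u := u) (w := w)
    (by decide) (by decide) (by norm_num) (by omega) (by decide) (by decide) ?_ ?_
  · simp only [List.sum_cons, List.sum_nil]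
    ring
  · simp only [transLam_cons, transLam_nil, List.sum_cons, List.sum_nil, List.length_cons,
      List.length_nil]
    push_cast
    ring

theorem hasBoundedPartition_even_high (u w : ℕ) :
    HasBoundedPartition (4 * u + 2 * w + 20) (3 * u + 2 * w + 14) := by
  refine hasBoundedPartition_hookShape (x := 6) (y := 5) (C := [5, 4]) (u := u) (w := w)
    (by decide) (by decide) (by norm_num) (by omega) (by decide) (by decide) ?_ ?_
  · simp only [List.sum_cons, List.sum_nil]
    ring
  · simp only [transLam_cons, transLam_nil, List.sum_cons, List.sum_nil, List.length_cons,
      List.length_nil]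
    push_cast
    ring

theorem hasBoundedPartition_of_odd {n m : ℕ} (hn : Odd n) (hm : n + 7 ≤ 2 * m ∧ m ≤ n - 7) :
    HasBoundedPartition n m := by
  have hmod := Nat.odd_iff.1 hn
  by_cases hlow : 4 * m + 3 ≤ 3 * n
  · obtain ⟨u, w, hw, rfl, rfl⟩ : ∃ u w, 1 ≤ w ∧ n = 4 * u + 2 * w + 7 ∧ m = 3 * u + w + 5 :=
      ⟨(2 * m - n - 3) / 2, n - m - 2 - (2 * m - n - 3) / 2, by omega⟩
    exact hasBoundedPartition_odd_low u w hw
  · obtain ⟨u, w, rfl, rfl⟩ : ∃ u w, n = 4 * u + 2 * w + 19 ∧ m = 3 * u + 2 * w + 14 :=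
      ⟨n - m - 5, (4 * m + 1 - 3 * n) / 2, by omega⟩
    exact hasBoundedPartition_odd_high u w

theorem hasBoundedPartition_of_even {n m : ℕ} (hn : Even n) (hm : n + 4 ≤ 2 * m ∧ m ≤ n - 6) :
    HasBoundedPartition n m := by
  have hmod := Nat.even_iff.1 hn
  by_cases hlow : 4 * m + 6 ≤ 3 * n
  · obtain ⟨u, w, hw, rfl, rfl⟩ : ∃ u w, 1 ≤ w ∧ n = 4 * u + 2 * w + 12 ∧ m = 3 * u + w + 8 :=
      ⟨(2 * m - n - 4) / 2, n - m - 4 - (2 * m - n - 4) / 2, by omega⟩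
    exact hasBoundedPartition_even_low u w hw
  · obtain ⟨u, w, rfl, rfl⟩ : ∃ u w, n = 4 * u + 2 * w + 20 ∧ m = 3 * u + 2 * w + 14 :=
      ⟨n - m - 6, (4 * m + 4 - 3 * n) / 2, by omega⟩
    exact hasBoundedPartition_even_high u w

theorem segment_S2_with_bounds_general (n : ℕ) (m : ℕ)
    (hodd : Odd n → n + 7 ≤ 2 * m ∧ m ≤ n - 7)
    (heven : Even n → n + 4 ≤ 2 * m ∧ m ≤ n - 6) :
    ∃ L : List ℕ, IsPartitionOf n L ∧ transLam L = (m : ℚ) ∧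
      (∀ x ∈ L, 2 * x ≤ n + 2) ∧ 2 * L.length ≤ n + 2 := by
  rcases Nat.even_or_odd n with hn | hn
  · exact hasBoundedPartition_of_even hn (heven hn)
  · exact hasBoundedPartition_of_odd hn (hodd hn)

theorem segment_S2_with_bounds (n : ℕ) (hn : 20 ≤ n) (m : ℕ)
    (hodd : Odd n → n + 7 ≤ 2 * m ∧ m ≤ n - 7)
    (heven : Even n → n + 4 ≤ 2 * m ∧ m ≤ n - 6) :
    ∃ L : List ℕ, IsPartitionOf n L ∧ transLam L = (m : ℚ) ∧
      (∀ x ∈ L, 2 * x ≤ n + 2) ∧ 2 * L.length ≤ n + 2 :=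
  segment_S2_with_bounds_general n m hodd heven
end

section
/- Let n ≥ 16 be even and let m be an even integer with (n+4)/2 ≤ m ≤ n−6. Then the sequence consisting of m/2 + 1, then (n+2−m)/2, then 4, then the number 2 repeated (n−4−m)/2 times, then the number 1 repeated m − (n+4)/2 times, is a partition of n and its value λ equals m. -/
/-! Writing `r = (n - 4 - m) / 2` and `s = m - (n + 4) / 2` for the numbers of parts `2` and `1`,
the partition becomes `(r + s + 5, r + 3, 4, 2^r, 1^s)`, a partition of `4r + 2s + 12`.
Appending a part `c` after `ℓ` parts changes `λ` by `c (c - 2ℓ - 1) / 2`, so `λ` of this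
explicit family is a polynomial in `r` and `s`, which collapses to `2 (r + s + 4) = m`. -/

lemma transLam_append_singleton (L : List ℕ) (c : ℕ) :
    transLam (L ++ [c]) = transLam L + c * (c - 2 * L.length - 1) / 2 := by
  unfold transLam
  rw [List.length_append, List.length_singleton, Finset.sum_range_succ,
    Finset.sum_congr rfl fun j hj => by rw [List.getD_append _ _ _ _ (Finset.mem_range.mp hj)],
    List.getD_append_right _ _ _ _ le_rfl]
  simp only [Nat.sub_self, List.getD_cons_zero]
  ring

lemma transLam_append_replicate (L : List ℕ) (c k : ℕ) :
    transLam (L ++ List.replicate k c) =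
      transLam L + k * (c * (c - 2 * L.length - 1) / 2) - c * (k * (k - 1) / 2) := by
  induction k with
  | zero => simp
  | succ k ih =>
    rw [List.replicate_succ', ← List.append_assoc, transLam_append_singleton, ih]
    simp only [List.length_append, List.length_replicate]
    push_cast
    ring

lemma transLam_triple (a b c : ℕ) :
    transLam [a, b, c] = (a * (a - 1) + b * (b - 3) + c * (c - 5)) / 2 := by
  simp [transLam, Finset.sum_range_succ]
  ring

lemma isPartitionOf_triple_append_twos_ones {r : ℕ} (s : ℕ) (hr : 1 ≤ r) :
    IsPartitionOf (4 * r + 2 * s + 12)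
      ([r + s + 5, r + 3, 4] ++ List.replicate r 2 ++ List.replicate s 1) := by
  refine ⟨?_, ?_, ?_⟩
  · simp only [List.cons_append, List.nil_append, List.pairwise_cons, List.mem_append,
      List.mem_cons, List.mem_replicate, List.pairwise_append, List.pairwise_replicate]
    refine ⟨?_, ?_, ?_, ?_, ?_, ?_⟩
    · rintro b (rfl | rfl | ⟨-, rfl⟩ | ⟨-, rfl⟩) <;> omega
    · rintro b (rfl | ⟨-, rfl⟩ | ⟨-, rfl⟩) <;> omega
    · rintro b (⟨-, rfl⟩ | ⟨-, rfl⟩) <;> omega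
    all_goals simp
  · simp only [List.mem_append, List.mem_cons, List.mem_replicate, List.not_mem_nil, or_false]
    rintro x (((rfl | rfl | rfl) | ⟨-, rfl⟩) | ⟨-, rfl⟩) <;> omega
  · simp only [List.sum_append, List.sum_cons, List.sum_nil, List.sum_replicate, smul_eq_mul]
    ring

lemma transLam_triple_append_twos_ones (r s : ℕ) :
    transLam ([r + s + 5, r + 3, 4] ++ List.replicate r 2 ++ List.replicate s 1) =
      2 * (r + s + 4) := by
  rw [transLam_append_replicate, transLam_append_replicate, transLam_triple]
  simp only [List.length_append, List.length_replicate, List.length_cons, List.length_nil]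
  push_cast
  ring

theorem case_even_n_even_lambda_general (n m : ℕ) (hneven : Even n) (hmeven : Even m)
    (h1 : n + 4 ≤ 2 * m) (h2 : m ≤ n - 6) :
    IsPartitionOf n
      ([m / 2 + 1, (n + 2 - m) / 2, 4] ++ List.replicate ((n - 4 - m) / 2) 2
        ++ List.replicate (m - (n + 4) / 2) 1) ∧
    transLam
      ([m / 2 + 1, (n + 2 - m) / 2, 4] ++ List.replicate ((n - 4 - m) / 2) 2
        ++ List.replicate (m - (n + 4) / 2) 1) = (m : ℚ) := by
  obtain ⟨u, rfl⟩ := hneven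
  obtain ⟨v, rfl⟩ := hmeven
  obtain ⟨r, hr⟩ : ∃ r, (u + u - 4 - (v + v)) / 2 = r := ⟨_, rfl⟩
  obtain ⟨s, hs⟩ : ∃ s, v + v - (u + u + 4) / 2 = s := ⟨_, rfl⟩
  have hfirst : (v + v) / 2 + 1 = r + s + 5 := by omega
  have hsecond : (u + u + 2 - (v + v)) / 2 = r + 3 := by omega
  have hn : u + u = 4 * r + 2 * s + 12 := by omega
  have hm : ((v + v : ℕ) : ℚ) = 2 * (r + s + 4) := by
    rw [show v + v = 2 * (r + s + 4) by omega]
    push_cast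
    ring
  rw [hr, hs, hfirst, hsecond, hn, hm]
  exact ⟨isPartitionOf_triple_append_twos_ones s (by omega), transLam_triple_append_twos_ones r s⟩

theorem case_even_n_even_lambda (n m : ℕ) (hn : 16 ≤ n) (hneven : Even n) (hmeven : Even m)
    (h1 : n + 4 ≤ 2 * m) (h2 : m ≤ n - 6) :
    IsPartitionOf n
      ([m / 2 + 1, (n + 2 - m) / 2, 4] ++ List.replicate ((n - 4 - m) / 2) 2
        ++ List.replicate (m - (n + 4) / 2) 1) ∧
    transLam
      ([m / 2 + 1, (n + 2 - m) / 2, 4] ++ List.replicate ((n - 4 - m) / 2) 2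
        ++ List.replicate (m - (n + 4) / 2) 1) = (m : ℚ) :=
  case_even_n_even_lambda_general n m hneven hmeven h1 h2
end
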